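/- Let u = (u₁,u₂,u₃) : ℝ³ → ℝ³ be a smooth displacement field. Then u satisfies the cubic universality constraints — ∂²u₁/∂x₁² = ∂²u₂/∂x₂² = ∂²u₃/∂x₃² = 0; ∂²u₁/∂x₂² + ∂²u₁/∂x₃² = 0; ∂²u₂/∂x₁² + ∂²u₂/∂x₃² = 0; ∂²u₃/∂x₁² + ∂²u₃/∂x₂² = 0; ∂²u₁/∂x₁∂x₃ + ∂²u₂/∂x₂∂x₃ = 0; ∂²u₂/∂x₁∂x₂ + ∂²u₃/∂x₁∂x₃ = 0; and ∂²u₁/∂x₁∂x₂ + ∂²u₃/∂x₂∂x₃ = 0, all identically on ℝ³ — if and only if there exist constants a, a₁, b₁, c₁, d₁, d₂, d₃ ∈ ℝ and smooth harmonic functions g₁, g₂, g₃ : ℝ² → ℝ such that u₁(x) = (a/2) x₁(x₃² − x₂²) + c₁ x₁x₃ + b₁ x₁x₂ + d₁ x₁ + g₁(x₂,x₃), u₂(x) = (a/2) x₂(x₁² − x₃²) + a₁ x₁x₂ − c₁ x₂x₃ + d₂ x₂ + g₂(x₁,x₃), and u₃(x) = (a/2) x₃(x₂² − x₁²) − a₁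 x₁x₃ − b₁ x₂x₃ + d₃ x₃ + g₃(x₁,x₂) for all x ∈ ℝ³. -/

import Mathlib

/-- Partial derivative of a scalar field on `ℝ³` in the `j`-th coordinate direction. -/
noncomputable def pd (j : Fin 3) (f : (Fin 3 → ℝ) → ℝ) : (Fin 3 → ℝ) → ℝ :=
  fun x => fderiv ℝ f x (Pi.single j 1)

/-- The `i`-th component of a vector field on `ℝ³`. -/
def comp (u : (Fin 3 → ℝ) → Fin 3 → ℝ) (i : Fin 3) : (Fin 3 → ℝ) → ℝ :=
  fun x => u x i

/-- Second partial derivative `∂²uᵢ/∂xⱼ∂xₖ` of the `i`-th component of `u`. -/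
noncomputable def pdd (j k : Fin 3) (u : (Fin 3 → ℝ) → Fin 3 → ℝ) (i : Fin 3) :
    (Fin 3 → ℝ) → ℝ :=
  pd j (pd k (comp u i))

/-- Partial derivative of a scalar field on `ℝ²` in the `j`-th coordinate direction. -/
noncomputable def pd2 (j : Fin 2) (f : (Fin 2 → ℝ) → ℝ) : (Fin 2 → ℝ) → ℝ :=
  fun x => fderiv ℝ f x (Pi.single j 1)

set_option maxHeartbeats 1000000



section tk
variable {f g : (Fin 3 → ℝ) → ℝ}

lemma pd_smooth (hf : ContDiff ℝ (⊤ : ℕ∞) f) (j : Fin 3) : ContDiff ℝ (⊤ : ℕ∞) (pd j f) :=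
  (hf.fderiv_right (m := (⊤:ℕ∞)) (by exact_mod_cast le_top)).clm_apply contDiff_const

lemma pd_diff (hf : ContDiff ℝ (⊤ : ℕ∞) f) (j : Fin 3) : Differentiable ℝ (pd j f) :=
  (pd_smooth hf j).differentiable (by simp)

lemma pd_swap (hf : ContDiff ℝ (⊤ : ℕ∞) f) (j k : Fin 3) (x : Fin 3 → ℝ) :
    pd j (pd k f) x = pd k (pd j f) x := by
  have hd : Differentiable ℝ (fderiv ℝ f) := (hf.fderiv_right (m := (⊤:ℕ∞)) (by exact_mod_cast le_top)).differentiable (by simp)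
  have hsym := second_derivative_symmetric (f'' := fderiv ℝ (fderiv ℝ f) x)
    (fun y => ((hf.differentiable (by simp)) y).hasFDerivAt) ((hd x).hasFDerivAt)
    ((Pi.single j 1 : Fin 3 → ℝ)) (Pi.single k 1)
  have h1 : ∀ (m : Fin 3), pd m (pd k f) x = fderiv ℝ (fderiv ℝ f) x (Pi.single m 1) (Pi.single k 1) := by
    intro m
    have : pd k f = fun y => (ContinuousLinearMap.apply ℝ ℝ (Pi.single k 1 : Fin 3 → ℝ)) (fderiv ℝ f y) := rfl
    rw [pd, this]
    rw [fderiv_comp' x (ContinuousLinearMap.differentiable _ _) (hd x)]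
    simp [ContinuousLinearMap.fderiv]
  rw [h1 j]
  have h2 : pd k (pd j f) x = fderiv ℝ (fderiv ℝ f) x (Pi.single k 1) ((Pi.single j 1 : Fin 3 → ℝ)) := by
    have : pd j f = fun y => (ContinuousLinearMap.apply ℝ ℝ (Pi.single j 1 : Fin 3 → ℝ)) (fderiv ℝ f y) := rfl
    rw [pd, this]
    rw [fderiv_comp' x (ContinuousLinearMap.differentiable _ _) (hd x)]
    simp [ContinuousLinearMap.fderiv]
  rw [h2]
  exact hsym
end tk

section tk2
variable {f g : (Fin 3 → ℝ) → ℝ}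

lemma pd_add (hf : Differentiable ℝ f) (hg : Differentiable ℝ g) (j : Fin 3) (x) :
    pd j (fun y => f y + g y) x = pd j f x + pd j g x := by
  simp [pd, fderiv_fun_add (hf x) (hg x)]

lemma pd_neg (j : Fin 3) (x) : pd j (fun y => -f y) x = -pd j f x := by
  simp [pd, fderiv_neg]

lemma pd_const (c : ℝ) (j : Fin 3) (x) : pd j (fun _ => c) x = 0 := by
  simp [pd]

lemma pd_zero_fun (j : Fin 3) (x) : pd j (fun _ => (0:ℝ)) x = 0 := pd_const 0 j x

lemma update_decomp (x : Fin 3 → ℝ) (j : Fin 3) (t : ℝ) :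
    Function.update x j 0 + t • (Pi.single j 1 : Fin 3 → ℝ) = Function.update x j t := by
  funext i
  by_cases h : i = j
  · subst h; simp
  · simp [Function.update_of_ne h, Pi.single_eq_of_ne h]

lemma slice_hasDerivAt (hf : Differentiable ℝ f) (x : Fin 3 → ℝ) (v : Fin 3 → ℝ) (t : ℝ) :
    HasDerivAt (fun s => f (x + s • v)) (fderiv ℝ f (x + t • v) v) t := by
  have hinner : HasDerivAt (fun s : ℝ => x + s • v) v t := by
    simpa using ((hasDerivAt_id t).smul_const v).const_add x
  exact (hf (x + t • v)).hasFDerivAt.comp_hasDerivAt t hinner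

/-- T0: if the j-th partial vanishes, f is constant along direction j. -/
lemma T0 (hf : Differentiable ℝ f) (j : Fin 3)
    (h : ∀ y, pd j f y = 0) (x : Fin 3 → ℝ) : f x = f (Function.update x j 0) := by
  set y := Function.update x j 0 with hy
  have key : ∀ t : ℝ, (fun s => f (y + s • (Pi.single j 1 : Fin 3 → ℝ))) t = f y := by
    intro t
    have hder : ∀ s : ℝ, deriv (fun s => f (y + s • (Pi.single j 1 : Fin 3 → ℝ))) s = 0 := by
      intro s
      rw [(slice_hasDerivAt hf y ((Pi.single j 1 : Fin 3 → ℝ)) s).deriv]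
      exact h _
    have hdiff : Differentiable ℝ (fun s => f (y + s • (Pi.single j 1 : Fin 3 → ℝ))) :=
      fun s => (slice_hasDerivAt hf y ((Pi.single j 1 : Fin 3 → ℝ)) s).differentiableAt
    have := is_const_of_deriv_eq_zero hdiff hder t 0
    simpa using this
  have h2 := key (x j)
  simp only [hy, update_decomp, Function.update_eq_self] at h2
  rw [hy]
  exact h2

lemma update_update (x : Fin 3 → ℝ) (j : Fin 3) (t : ℝ) :
    Function.update (Function.update x j t) j 0 = Function.update x j 0 := by
  simp

/-- T1: if the second j-partial vanishes, f is affine along direction j. -/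
lemma T1 (hf : ContDiff ℝ (⊤:ℕ∞) f) (j : Fin 3)
    (h : ∀ y, pd j (pd j f) y = 0) (x : Fin 3 → ℝ) :
    f x = f (Function.update x j 0) + x j * pd j f (Function.update x j 0) := by
  set y := Function.update x j 0 with hy
  set c : ℝ := pd j f y with hc
  have hfd : Differentiable ℝ f := hf.differentiable (by simp)
  have hpd : ∀ t : ℝ, pd j f (y + t • (Pi.single j 1 : Fin 3 → ℝ)) = c := by
    intro t
    have h2 := T0 (pd_diff hf j) j h (y + t • (Pi.single j 1 : Fin 3 → ℝ))
    simp only [hy, update_decomp, update_update] at h2 ⊢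
    exact h2
  have key : ∀ t : ℝ, f (y + t • (Pi.single j 1 : Fin 3 → ℝ)) - t * c = f y := by
    intro t
    have hdiff : Differentiable ℝ (fun s : ℝ => f (y + s • (Pi.single j 1 : Fin 3 → ℝ)) - s * c) := by
      intro s
      exact ((slice_hasDerivAt hfd y ((Pi.single j 1 : Fin 3 → ℝ)) s).sub
        (by simpa using (hasDerivAt_id s).mul_const c : HasDerivAt (fun s : ℝ => s * c) c s)).differentiableAt
    have hder : ∀ s : ℝ, deriv (fun s : ℝ => f (y + s • (Pi.single j 1 : Fin 3 → ℝ)) - s * c) s = 0 := by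
      intro s
      rw [HasDerivAt.deriv (f := fun s : ℝ => f (y + s • (Pi.single j 1 : Fin 3 → ℝ)) - s * c) ((slice_hasDerivAt hfd y ((Pi.single j 1 : Fin 3 → ℝ)) s).sub
        (by simpa using (hasDerivAt_id s).mul_const c : HasDerivAt (fun s : ℝ => s * c) c s))]
      have := hpd s
      simp [pd] at this ⊢
      rw [this]
      ring
    have := is_const_of_deriv_eq_zero hdiff hder t 0
    simpa using this
  have h2 := key (x j)
  simp only [hy, update_decomp, Function.update_eq_self] at h2
  rw [hy, hc]
  linarith [h2]

/-- T2: if the third j-partial vanishes, f is quadratic along direction j. -/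
lemma T2 (hf : ContDiff ℝ (⊤:ℕ∞) f) (j : Fin 3)
    (h : ∀ y, pd j (pd j (pd j f)) y = 0) (x : Fin 3 → ℝ) :
    f x = f (Function.update x j 0) + x j * pd j f (Function.update x j 0)
      + (x j)^2 / 2 * pd j (pd j f) (Function.update x j 0) := by
  set y := Function.update x j 0 with hy
  set c1 : ℝ := pd j f y with hc1
  set c2 : ℝ := pd j (pd j f) y with hc2
  have hfd : Differentiable ℝ f := hf.differentiable (by simp)
  have hpd : ∀ t : ℝ, pd j f (y + t • (Pi.single j 1 : Fin 3 → ℝ)) = c1 + t * c2 := by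
    intro t
    have h2 := T1 (pd_smooth hf j) j h (y + t • (Pi.single j 1 : Fin 3 → ℝ))
    simp only [hy, update_decomp, update_update] at h2 ⊢
    rw [h2, Function.update_self]
  have key : ∀ t : ℝ, f (y + t • (Pi.single j 1 : Fin 3 → ℝ)) - t * c1 - t^2/2 * c2 = f y := by
    intro t
    have hAt : ∀ s : ℝ, HasDerivAt
        (fun s : ℝ => f (y + s • (Pi.single j 1 : Fin 3 → ℝ)) - s * c1 - s^2/2 * c2)
        (fderiv ℝ f (y + s • (Pi.single j 1 : Fin 3 → ℝ)) ((Pi.single j 1 : Fin 3 → ℝ)) - c1 - s * c2) s := by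
      intro s
      have h1 := slice_hasDerivAt hfd y ((Pi.single j 1 : Fin 3 → ℝ)) s
      have h2 : HasDerivAt (fun s : ℝ => s * c1) c1 s := by simpa using (hasDerivAt_id s).mul_const c1
      have h3 : HasDerivAt (fun s : ℝ => s^2/2 * c2) (s * c2) s := by
        have : HasDerivAt (fun s : ℝ => s^2/2) s s := by
          simpa using ((hasDerivAt_pow 2 s).div_const 2)
        simpa using this.mul_const c2
      exact (h1.sub h2).sub h3
    have hdiff : Differentiable ℝ (fun s : ℝ => f (y + s • (Pi.single j 1 : Fin 3 → ℝ)) - s * c1 - s^2/2 * c2) :=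
      fun s => (hAt s).differentiableAt
    have hder : ∀ s : ℝ, deriv (fun s : ℝ => f (y + s • (Pi.single j 1 : Fin 3 → ℝ)) - s * c1 - s^2/2 * c2) s = 0 := by
      intro s
      rw [(hAt s).deriv]
      have := hpd s
      simp [pd] at this
      rw [this]
      ring
    have := is_const_of_deriv_eq_zero hdiff hder t 0
    simpa using this
  have h2 := key (x j)
  simp only [hy, update_decomp, Function.update_eq_self] at h2
  rw [hy, hc1, hc2]
  linarith [h2]
end tk2


section tk3
variable {f g : (Fin 3 → ℝ) → ℝ}

/-- all partials vanish → constant -/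
lemma Tconst (hf : Differentiable ℝ f) (h : ∀ j y, pd j f y = 0) (x : Fin 3 → ℝ) :
    f x = f 0 := by
  rw [T0 hf 0 (h 0) x, T0 hf 1 (h 1) _, T0 hf 2 (h 2) _]
  congr 1
  funext i
  fin_cases i <;> simp

lemma pd2_smooth {G : (Fin 2 → ℝ) → ℝ} (hG : ContDiff ℝ (⊤ : ℕ∞) G) (j : Fin 2) :
    ContDiff ℝ (⊤ : ℕ∞) (pd2 j G) :=
  (hG.fderiv_right (m := (⊤:ℕ∞)) (by exact_mod_cast le_top)).clm_apply contDiff_const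

lemma pd2_diff {G : (Fin 2 → ℝ) → ℝ} (hG : ContDiff ℝ (⊤ : ℕ∞) G) (j : Fin 2) :
    Differentiable ℝ (pd2 j G) :=
  (pd2_smooth hG j).differentiable (by simp)

lemma pd_of_hasFDerivAt {x : Fin 3 → ℝ} {f' : (Fin 3 → ℝ) →L[ℝ] ℝ}
    (h : HasFDerivAt f f' x) (j : Fin 3) : pd j f x = f' (Pi.single j 1) := by
  rw [pd, h.fderiv]

lemma pd2_of_hasFDerivAt {G : (Fin 2 → ℝ) → ℝ} {p : Fin 2 → ℝ} {G' : (Fin 2 → ℝ) →L[ℝ] ℝ}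
    (h : HasFDerivAt G G' p) (j : Fin 2) : pd2 j G p = G' (Pi.single j 1) := by
  rw [pd2, h.fderiv]

/-- composing with a linear map ℝ³ → ℝ² -/
lemma pd_comp_clm {G : (Fin 2 → ℝ) → ℝ} (hG : Differentiable ℝ G)
    (L : (Fin 3 → ℝ) →L[ℝ] (Fin 2 → ℝ)) (j : Fin 3) (x : Fin 3 → ℝ) :
    pd j (fun y => G (L y)) x = fderiv ℝ G (L x) (L (Pi.single j 1)) := by
  have h : HasFDerivAt (fun y => G (L y)) ((fderiv ℝ G (L x)).comp L) x :=
    (hG (L x)).hasFDerivAt.comp x L.hasFDerivAt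
  rw [pd_of_hasFDerivAt h j]
  rfl

/-- composing with a linear map ℝ² → ℝ³ -/
lemma pd2_comp_clm (hF : Differentiable ℝ f)
    (M : (Fin 2 → ℝ) →L[ℝ] (Fin 3 → ℝ)) (j : Fin 2) (p : Fin 2 → ℝ) :
    pd2 j (fun q => f (M q)) p = fderiv ℝ f (M p) (M (Pi.single j 1)) := by
  have h : HasFDerivAt (fun q => f (M q)) ((fderiv ℝ f (M p)).comp M) p :=
    (hF (M p)).hasFDerivAt.comp p M.hasFDerivAt
  rw [pd2_of_hasFDerivAt h j]
  rfl

end tk3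

/-- restriction maps -/
noncomputable def Lm (c : Fin 2 → Fin 3) : (Fin 3 → ℝ) →L[ℝ] (Fin 2 → ℝ) :=
  ContinuousLinearMap.pi (fun i => ContinuousLinearMap.proj (c i))

/-- embedding maps -/
noncomputable def Mm (c : Fin 3 → ((Fin 2 → ℝ) →L[ℝ] ℝ)) : (Fin 2 → ℝ) →L[ℝ] (Fin 3 → ℝ) :=
  ContinuousLinearMap.pi c

noncomputable def M₁ : (Fin 2 → ℝ) →L[ℝ] (Fin 3 → ℝ) :=
  Mm ![0, ContinuousLinearMap.proj 0, ContinuousLinearMap.proj 1]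
noncomputable def M₂ : (Fin 2 → ℝ) →L[ℝ] (Fin 3 → ℝ) :=
  Mm ![ContinuousLinearMap.proj 0, 0, ContinuousLinearMap.proj 1]
noncomputable def M₃ : (Fin 2 → ℝ) →L[ℝ] (Fin 3 → ℝ) :=
  Mm ![ContinuousLinearMap.proj 0, ContinuousLinearMap.proj 1, 0]

lemma Lm_apply (c : Fin 2 → Fin 3) (x : Fin 3 → ℝ) (i : Fin 2) : Lm c x i = x (c i) := rfl

section comput
lemma M₁_single0 : M₁ (Pi.single 0 1) = (Pi.single 1 1 : Fin 3 → ℝ) := by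
  funext i; fin_cases i <;> simp [M₁, Mm, ContinuousLinearMap.pi_apply] <;> rfl
lemma M₁_single1 : M₁ (Pi.single 1 1) = (Pi.single 2 1 : Fin 3 → ℝ) := by
  funext i; fin_cases i <;> simp [M₁, Mm, ContinuousLinearMap.pi_apply] <;> rfl
lemma M₂_single0 : M₂ (Pi.single 0 1) = (Pi.single 0 1 : Fin 3 → ℝ) := by
  funext i; fin_cases i <;> simp [M₂, Mm, ContinuousLinearMap.pi_apply] <;> rfl
lemma M₂_single1 : M₂ (Pi.single 1 1) = (Pi.single 2 1 : Fin 3 → ℝ) := by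
  funext i; fin_cases i <;> simp [M₂, Mm, ContinuousLinearMap.pi_apply] <;> rfl
lemma M₃_single0 : M₃ (Pi.single 0 1) = (Pi.single 0 1 : Fin 3 → ℝ) := by
  funext i; fin_cases i <;> simp [M₃, Mm, ContinuousLinearMap.pi_apply] <;> rfl
lemma M₃_single1 : M₃ (Pi.single 1 1) = (Pi.single 1 1 : Fin 3 → ℝ) := by
  funext i; fin_cases i <;> simp [M₃, Mm, ContinuousLinearMap.pi_apply] <;> rfl

lemma M₁_emb (x : Fin 3 → ℝ) : M₁ ![x 1, x 2] = Function.update x 0 0 := by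
  funext i; fin_cases i <;> simp [M₁, Mm, ContinuousLinearMap.pi_apply] <;> rfl
lemma M₂_emb (x : Fin 3 → ℝ) : M₂ ![x 0, x 2] = Function.update x 1 0 := by
  funext i; fin_cases i <;> simp [M₂, Mm, ContinuousLinearMap.pi_apply] <;> rfl
lemma M₃_emb (x : Fin 3 → ℝ) : M₃ ![x 0, x 1] = Function.update x 2 0 := by
  funext i; fin_cases i <;> simp [M₃, Mm, ContinuousLinearMap.pi_apply] <;> rfl
end comput

section comput2
lemma Lm_emb1 (x : Fin 3 → ℝ) : Lm ![1,2] x = ![x 1, x 2] := by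
  funext i; fin_cases i <;> rfl
lemma Lm_emb2 (x : Fin 3 → ℝ) : Lm ![0,2] x = ![x 0, x 2] := by
  funext i; fin_cases i <;> rfl
lemma Lm_emb3 (x : Fin 3 → ℝ) : Lm ![0,1] x = ![x 0, x 1] := by
  funext i; fin_cases i <;> rfl

lemma Lm1_s0 : Lm ![1,2] (Pi.single 0 1) = 0 := by funext i; fin_cases i <;> simp [Lm_apply]
lemma Lm1_s1 : Lm ![1,2] (Pi.single 1 1) = Pi.single 0 1 := by
  funext i; fin_cases i <;> simp [Lm_apply] <;> rfl
lemma Lm1_s2 : Lm ![1,2] (Pi.single 2 1) = Pi.single 1 1 := by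
  funext i; fin_cases i <;> simp [Lm_apply] <;> rfl
lemma Lm2_s0 : Lm ![0,2] (Pi.single 0 1) = Pi.single 0 1 := by
  funext i; fin_cases i <;> simp [Lm_apply] <;> rfl
lemma Lm2_s1 : Lm ![0,2] (Pi.single 1 1) = 0 := by funext i; fin_cases i <;> simp [Lm_apply]
lemma Lm2_s2 : Lm ![0,2] (Pi.single 2 1) = Pi.single 1 1 := by
  funext i; fin_cases i <;> simp [Lm_apply] <;> rfl
lemma Lm3_s0 : Lm ![0,1] (Pi.single 0 1) = Pi.single 0 1 := by
  funext i; fin_cases i <;> simp [Lm_apply] <;> rfl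
lemma Lm3_s1 : Lm ![0,1] (Pi.single 1 1) = Pi.single 1 1 := by
  funext i; fin_cases i <;> simp [Lm_apply] <;> rfl
lemma Lm3_s2 : Lm ![0,1] (Pi.single 2 1) = 0 := by funext i; fin_cases i <;> simp [Lm_apply]
end comput2

section arith
variable {f g : (Fin 3 → ℝ) → ℝ} {x : Fin 3 → ℝ}

lemma pd_mul (hf : Differentiable ℝ f) (hg : Differentiable ℝ g) (j : Fin 3) (x) :
    pd j (fun y => f y * g y) x = pd j f x * g x + f x * pd j g x := by
  have h := ((hf x).hasFDerivAt.mul (hg x).hasFDerivAt)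
  rw [pd_of_hasFDerivAt (f := fun y => f y * g y) h j]
  simp [pd]
  ring

lemma diff_coord (k : Fin 3) : Differentiable ℝ (fun y : Fin 3 → ℝ => y k) :=
  (ContinuousLinearMap.proj k : (Fin 3 → ℝ) →L[ℝ] ℝ).differentiable

lemma pd_coord (j k : Fin 3) (x : Fin 3 → ℝ) :
    pd j (fun y => y k) x = (Pi.single j 1 : Fin 3 → ℝ) k := by
  have h : HasFDerivAt (fun y : Fin 3 → ℝ => y k)
      (ContinuousLinearMap.proj k : (Fin 3 → ℝ) →L[ℝ] ℝ) x :=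
    (ContinuousLinearMap.proj k : (Fin 3 → ℝ) →L[ℝ] ℝ).hasFDerivAt
  rw [pd_of_hasFDerivAt h j]
  rfl

lemma pd_const_mul (hf : Differentiable ℝ f) (c : ℝ) (j : Fin 3) (x) :
    pd j (fun y => c * f y) x = c * pd j f x := by
  have h := ((hf x).hasFDerivAt.const_mul c)
  rw [pd_of_hasFDerivAt h j]
  simp [pd]

lemma pd_sub (hf : Differentiable ℝ f) (hg : Differentiable ℝ g) (j : Fin 3) (x) :
    pd j (fun y => f y - g y) x = pd j f x - pd j g x := by
  simp [pd, fderiv_fun_sub (hf x) (hg x)]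
end arith

section funlvl
variable {f : (Fin 3 → ℝ) → ℝ}
lemma pd_swap' (hf : ContDiff ℝ (⊤:ℕ∞) f) (j k : Fin 3) :
    pd j (pd k f) = pd k (pd j f) := funext (pd_swap hf j k)
lemma pd_const' (c : ℝ) (j : Fin 3) : pd j (fun _ : Fin 3 → ℝ => c) = fun _ => 0 :=
  funext (pd_const c j)
lemma pd_neg' (j : Fin 3) : pd j (fun y => -f y) = fun x => -(pd j f x) :=
  funext (pd_neg j)
end funlvl

lemma pd2_fold (G : (Fin 2 → ℝ) → ℝ) (p : Fin 2 → ℝ) (j : Fin 2) :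
    fderiv ℝ G p (Pi.single j 1) = pd2 j G p := rfl

section backward
variable (u : (Fin 3 → ℝ) → Fin 3 → ℝ) (a a₁ b₁ c₁ d₁ d₂ d₃ : ℝ)
  (g₁ g₂ g₃ : (Fin 2 → ℝ) → ℝ)

lemma backward_constraints
    (hg₁ : ContDiff ℝ (⊤ : ℕ∞) g₁) (hg₂ : ContDiff ℝ (⊤ : ℕ∞) g₂) (hg₃ : ContDiff ℝ (⊤ : ℕ∞) g₃)
    (hh₁ : ∀ p, pd2 0 (pd2 0 g₁) p + pd2 1 (pd2 1 g₁) p = 0)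
    (hh₂ : ∀ p, pd2 0 (pd2 0 g₂) p + pd2 1 (pd2 1 g₂) p = 0)
    (hh₃ : ∀ p, pd2 0 (pd2 0 g₃) p + pd2 1 (pd2 1 g₃) p = 0)
    (e₁ : ∀ x, u x 0 = (a / 2) * x 0 * (x 2 ^ 2 - x 1 ^ 2) + c₁ * (x 0 * x 2)
          + b₁ * (x 0 * x 1) + d₁ * x 0 + g₁ ![x 1, x 2])
    (e₂ : ∀ x, u x 1 = (a / 2) * x 1 * (x 0 ^ 2 - x 2 ^ 2) + a₁ * (x 0 * x 1)
          - c₁ * (x 1 * x 2) + d₂ * x 1 + g₂ ![x 0, x 2])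
    (e₃ : ∀ x, u x 2 = (a / 2) * x 2 * (x 1 ^ 2 - x 0 ^ 2) - a₁ * (x 0 * x 2)
          - b₁ * (x 1 * x 2) + d₃ * x 2 + g₃ ![x 0, x 1]) :
    (∀ x, pdd 0 0 u 0 x = 0) ∧ (∀ x, pdd 1 1 u 1 x = 0) ∧ (∀ x, pdd 2 2 u 2 x = 0) ∧
     (∀ x, pdd 1 1 u 0 x + pdd 2 2 u 0 x = 0) ∧
     (∀ x, pdd 0 0 u 1 x + pdd 2 2 u 1 x = 0) ∧
     (∀ x, pdd 0 0 u 2 x + pdd 1 1 u 2 x = 0) ∧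
     (∀ x, pdd 0 2 u 0 x + pdd 1 2 u 1 x = 0) ∧
     (∀ x, pdd 0 1 u 1 x + pdd 0 2 u 2 x = 0) ∧
     (∀ x, pdd 0 1 u 0 x + pdd 1 2 u 2 x = 0) := by
  have hgd₁ : Differentiable ℝ g₁ := hg₁.differentiable (by simp)
  have hgd₂ : Differentiable ℝ g₂ := hg₂.differentiable (by simp)
  have hgd₃ : Differentiable ℝ g₃ := hg₃.differentiable (by simp)
  have hp₁0 : Differentiable ℝ (pd2 0 g₁) := pd2_diff hg₁ 0
  have hp₁1 : Differentiable ℝ (pd2 1 g₁) := pd2_diff hg₁ 1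
  have hp₂0 : Differentiable ℝ (pd2 0 g₂) := pd2_diff hg₂ 0
  have hp₂1 : Differentiable ℝ (pd2 1 g₂) := pd2_diff hg₂ 1
  have hp₃0 : Differentiable ℝ (pd2 0 g₃) := pd2_diff hg₃ 0
  have hp₃1 : Differentiable ℝ (pd2 1 g₃) := pd2_diff hg₃ 1
  have hcu0 : comp u 0 = fun x => (a / 2) * x 0 * (x 2 ^ 2 - x 1 ^ 2) + c₁ * (x 0 * x 2)
      + b₁ * (x 0 * x 1) + d₁ * x 0 + g₁ (Lm ![1,2] x) := by
    funext x; rw [comp, e₁, Lm_emb1]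
  have hcu1 : comp u 1 = fun x => (a / 2) * x 1 * (x 0 ^ 2 - x 2 ^ 2) + a₁ * (x 0 * x 1)
      - c₁ * (x 1 * x 2) + d₂ * x 1 + g₂ (Lm ![0,2] x) := by
    funext x; rw [comp, e₂, Lm_emb2]
  have hcu2 : comp u 2 = fun x => (a / 2) * x 2 * (x 1 ^ 2 - x 0 ^ 2) - a₁ * (x 0 * x 2)
      - b₁ * (x 1 * x 2) + d₃ * x 2 + g₃ (Lm ![0,1] x) := by
    funext x; rw [comp, e₃, Lm_emb3]
  -- first derivatives of component 0
  have d00 : pd 0 (comp u 0) = fun x => (a/2) * (x 2 * x 2 - x 1 * x 1) + c₁ * x 2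
      + b₁ * x 1 + d₁ := by
    funext x; rw [hcu0]
    simp (disch := fun_prop) only [pd_add, pd_mul, pd_const_mul, pd_sub, pd_neg, pd_coord,
      pd_const, pd_comp_clm, Lm1_s0, Lm1_s1, Lm1_s2, pd2_fold, pow_two]
    simp [Pi.single_apply]
  have d01 : pd 1 (comp u 0) = fun x => -(a * (x 0 * x 1)) + b₁ * x 0
      + pd2 0 g₁ (Lm ![1,2] x) := by
    funext x; rw [hcu0]
    simp (disch := fun_prop) only [pd_add, pd_mul, pd_const_mul, pd_sub, pd_neg, pd_coord,
      pd_const, pd_comp_clm, Lm1_s0, Lm1_s1, Lm1_s2, pd2_fold, pow_two]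
    simp [Pi.single_apply]; ring
  have d02 : pd 2 (comp u 0) = fun x => a * (x 0 * x 2) + c₁ * x 0
      + pd2 1 g₁ (Lm ![1,2] x) := by
    funext x; rw [hcu0]
    simp (disch := fun_prop) only [pd_add, pd_mul, pd_const_mul, pd_sub, pd_neg, pd_coord,
      pd_const, pd_comp_clm, Lm1_s0, Lm1_s1, Lm1_s2, pd2_fold, pow_two]
    simp [Pi.single_apply]; ring
  -- first derivatives of component 1
  have d10 : pd 0 (comp u 1) = fun x => a * (x 0 * x 1) + a₁ * x 1
      + pd2 0 g₂ (Lm ![0,2] x) := by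
    funext x; rw [hcu1]
    simp (disch := fun_prop) only [pd_add, pd_mul, pd_const_mul, pd_sub, pd_neg, pd_coord,
      pd_const, pd_comp_clm, Lm2_s0, Lm2_s1, Lm2_s2, pd2_fold, pow_two]
    simp [Pi.single_apply]; ring
  have d11 : pd 1 (comp u 1) = fun x => (a/2) * (x 0 * x 0 - x 2 * x 2) + a₁ * x 0
      - c₁ * x 2 + d₂ := by
    funext x; rw [hcu1]
    simp (disch := fun_prop) only [pd_add, pd_mul, pd_const_mul, pd_sub, pd_neg, pd_coord,
      pd_const, pd_comp_clm, Lm2_s0, Lm2_s1, Lm2_s2, pd2_fold, pow_two]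
    simp [Pi.single_apply]
  have d12 : pd 2 (comp u 1) = fun x => -(a * (x 1 * x 2)) - c₁ * x 1
      + pd2 1 g₂ (Lm ![0,2] x) := by
    funext x; rw [hcu1]
    simp (disch := fun_prop) only [pd_add, pd_mul, pd_const_mul, pd_sub, pd_neg, pd_coord,
      pd_const, pd_comp_clm, Lm2_s0, Lm2_s1, Lm2_s2, pd2_fold, pow_two]
    simp [Pi.single_apply]; ring
  -- first derivatives of component 2
  have d20 : pd 0 (comp u 2) = fun x => -(a * (x 0 * x 2)) - a₁ * x 2
      + pd2 0 g₃ (Lm ![0,1] x) := by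
    funext x; rw [hcu2]
    simp (disch := fun_prop) only [pd_add, pd_mul, pd_const_mul, pd_sub, pd_neg, pd_coord,
      pd_const, pd_comp_clm, Lm3_s0, Lm3_s1, Lm3_s2, pd2_fold, pow_two]
    simp [Pi.single_apply]; ring
  have d21 : pd 1 (comp u 2) = fun x => a * (x 1 * x 2) - b₁ * x 2
      + pd2 1 g₃ (Lm ![0,1] x) := by
    funext x; rw [hcu2]
    simp (disch := fun_prop) only [pd_add, pd_mul, pd_const_mul, pd_sub, pd_neg, pd_coord,
      pd_const, pd_comp_clm, Lm3_s0, Lm3_s1, Lm3_s2, pd2_fold, pow_two]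
    simp [Pi.single_apply]; ring
  have d22 : pd 2 (comp u 2) = fun x => (a/2) * (x 1 * x 1 - x 0 * x 0) - a₁ * x 0
      - b₁ * x 1 + d₃ := by
    funext x; rw [hcu2]
    simp (disch := fun_prop) only [pd_add, pd_mul, pd_const_mul, pd_sub, pd_neg, pd_coord,
      pd_const, pd_comp_clm, Lm3_s0, Lm3_s1, Lm3_s2, pd2_fold, pow_two]
    simp [Pi.single_apply]
  refine ⟨?_, ?_, ?_, ?_, ?_, ?_, ?_, ?_, ?_⟩ <;> intro x
  · show pd 0 (pd 0 (comp u 0)) x = 0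
    rw [d00]
    simp (disch := fun_prop) only [pd_add, pd_mul, pd_const_mul, pd_sub, pd_neg, pd_coord,
      pd_const, pd_comp_clm, Lm1_s0, Lm1_s1, Lm1_s2, pd2_fold]
    simp [Pi.single_apply]
  · show pd 1 (pd 1 (comp u 1)) x = 0
    rw [d11]
    simp (disch := fun_prop) only [pd_add, pd_mul, pd_const_mul, pd_sub, pd_neg, pd_coord,
      pd_const, pd_comp_clm, Lm2_s0, Lm2_s1, Lm2_s2, pd2_fold]
    simp [Pi.single_apply]
  · show pd 2 (pd 2 (comp u 2)) x = 0
    rw [d22]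
    simp (disch := fun_prop) only [pd_add, pd_mul, pd_const_mul, pd_sub, pd_neg, pd_coord,
      pd_const, pd_comp_clm, Lm3_s0, Lm3_s1, Lm3_s2, pd2_fold]
    simp [Pi.single_apply]
  · show pd 1 (pd 1 (comp u 0)) x + pd 2 (pd 2 (comp u 0)) x = 0
    rw [d01, d02]
    simp (disch := fun_prop) only [pd_add, pd_mul, pd_const_mul, pd_sub, pd_neg, pd_coord,
      pd_const, pd_comp_clm, Lm1_s0, Lm1_s1, Lm1_s2, pd2_fold]
    simp [Pi.single_apply]
    have := hh₁ (Lm ![1,2] x)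
    linarith [this]
  · show pd 0 (pd 0 (comp u 1)) x + pd 2 (pd 2 (comp u 1)) x = 0
    rw [d10, d12]
    simp (disch := fun_prop) only [pd_add, pd_mul, pd_const_mul, pd_sub, pd_neg, pd_coord,
      pd_const, pd_comp_clm, Lm2_s0, Lm2_s1, Lm2_s2, pd2_fold]
    simp [Pi.single_apply]
    have := hh₂ (Lm ![0,2] x)
    linarith [this]
  · show pd 0 (pd 0 (comp u 2)) x + pd 1 (pd 1 (comp u 2)) x = 0
    rw [d20, d21]
    simp (disch := fun_prop) only [pd_add, pd_mul, pd_const_mul, pd_sub, pd_neg, pd_coord,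
      pd_const, pd_comp_clm, Lm3_s0, Lm3_s1, Lm3_s2, pd2_fold]
    simp [Pi.single_apply]
    have := hh₃ (Lm ![0,1] x)
    linarith [this]
  · show pd 0 (pd 2 (comp u 0)) x + pd 1 (pd 2 (comp u 1)) x = 0
    rw [d02, d12]
    simp (disch := fun_prop) only [pd_add, pd_mul, pd_const_mul, pd_sub, pd_neg, pd_coord,
      pd_const, pd_comp_clm, Lm1_s0, Lm1_s1, Lm1_s2, Lm2_s0, Lm2_s1, Lm2_s2, pd2_fold]
    simp [Pi.single_apply]
    try ring
  · show pd 0 (pd 1 (comp u 1)) x + pd 0 (pd 2 (comp u 2)) x = 0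
    rw [d11, d22]
    simp (disch := fun_prop) only [pd_add, pd_mul, pd_const_mul, pd_sub, pd_neg, pd_coord,
      pd_const, pd_comp_clm, Lm2_s0, Lm2_s1, Lm2_s2, Lm3_s0, Lm3_s1, Lm3_s2, pd2_fold]
    simp [Pi.single_apply]
    try ring
  · show pd 0 (pd 1 (comp u 0)) x + pd 1 (pd 2 (comp u 2)) x = 0
    rw [d01, d22]
    simp (disch := fun_prop) only [pd_add, pd_mul, pd_const_mul, pd_sub, pd_neg, pd_coord,
      pd_const, pd_comp_clm, Lm1_s0, Lm1_s1, Lm1_s2, Lm3_s0, Lm3_s1, Lm3_s2, pd2_fold]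
    simp [Pi.single_apply]
    try ring
end backward


section forward
variable (u : (Fin 3 → ℝ) → Fin 3 → ℝ)

lemma forward_repr (hu : ContDiff ℝ (⊤ : ℕ∞) u)
    (h1 : ∀ x, pdd 0 0 u 0 x = 0) (h2 : ∀ x, pdd 1 1 u 1 x = 0) (h3 : ∀ x, pdd 2 2 u 2 x = 0)
    (h4 : ∀ x, pdd 1 1 u 0 x + pdd 2 2 u 0 x = 0)
    (h5 : ∀ x, pdd 0 0 u 1 x + pdd 2 2 u 1 x = 0)
    (h6 : ∀ x, pdd 0 0 u 2 x + pdd 1 1 u 2 x = 0)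
    (h7 : ∀ x, pdd 0 2 u 0 x + pdd 1 2 u 1 x = 0)
    (h8 : ∀ x, pdd 0 1 u 1 x + pdd 0 2 u 2 x = 0)
    (h9 : ∀ x, pdd 0 1 u 0 x + pdd 1 2 u 2 x = 0) :
    ∃ (a a₁ b₁ c₁ d₁ d₂ d₃ : ℝ) (g₁ g₂ g₃ : (Fin 2 → ℝ) → ℝ),
      ContDiff ℝ (⊤ : ℕ∞) g₁ ∧ ContDiff ℝ (⊤ : ℕ∞) g₂ ∧ ContDiff ℝ (⊤ : ℕ∞) g₃ ∧
      (∀ p, pd2 0 (pd2 0 g₁) p + pd2 1 (pd2 1 g₁) p = 0) ∧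
      (∀ p, pd2 0 (pd2 0 g₂) p + pd2 1 (pd2 1 g₂) p = 0) ∧
      (∀ p, pd2 0 (pd2 0 g₃) p + pd2 1 (pd2 1 g₃) p = 0) ∧
      (∀ x, u x 0 = (a / 2) * x 0 * (x 2 ^ 2 - x 1 ^ 2) + c₁ * (x 0 * x 2)
          + b₁ * (x 0 * x 1) + d₁ * x 0 + g₁ ![x 1, x 2]) ∧
      (∀ x, u x 1 = (a / 2) * x 1 * (x 0 ^ 2 - x 2 ^ 2) + a₁ * (x 0 * x 1)
          - c₁ * (x 1 * x 2) + d₂ * x 1 + g₂ ![x 0, x 2]) ∧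
      (∀ x, u x 2 = (a / 2) * x 2 * (x 1 ^ 2 - x 0 ^ 2) - a₁ * (x 0 * x 2)
          - b₁ * (x 1 * x 2) + d₃ * x 2 + g₃ ![x 0, x 1]) := by
  have hcu : ∀ i, ContDiff ℝ (⊤ : ℕ∞) (comp u i) := fun i => contDiff_pi.mp hu i
  have hcud : ∀ i, Differentiable ℝ (comp u i) :=
    fun i => (hcu i).differentiable (by simp)
  -- abbreviations (definitional)
  -- A1 = pd 0 (comp u 0), A2 = pd 1 (comp u 1), A3 = pd 2 (comp u 2)
  -- P = pd 2 A1, Q = pd 1 A1, S = pd 0 A2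
  have hA1 : ContDiff ℝ (⊤ : ℕ∞) (pd 0 (comp u 0)) := pd_smooth (hcu 0) 0
  have hA2 : ContDiff ℝ (⊤ : ℕ∞) (pd 1 (comp u 1)) := pd_smooth (hcu 1) 1
  have hA3 : ContDiff ℝ (⊤ : ℕ∞) (pd 2 (comp u 2)) := pd_smooth (hcu 2) 2
  have hP : ContDiff ℝ (⊤ : ℕ∞) (pd 2 (pd 0 (comp u 0))) := pd_smooth hA1 2
  have hQ : ContDiff ℝ (⊤ : ℕ∞) (pd 1 (pd 0 (comp u 0))) := pd_smooth hA1 1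
  have hS : ContDiff ℝ (⊤ : ℕ∞) (pd 0 (pd 1 (comp u 1))) := pd_smooth hA2 0
  have z00 : pd 0 (pd 0 (comp u 0)) = fun _ => (0:ℝ) := funext h1
  have z11 : pd 1 (pd 1 (comp u 1)) = fun _ => (0:ℝ) := funext h2
  have z22 : pd 2 (pd 2 (comp u 2)) = fun _ => (0:ℝ) := funext h3
  -- P facts
  have hP0 : ∀ y, pd 0 (pd 2 (pd 0 (comp u 0))) y = 0 := by
    intro y
    rw [pd_swap' hA1 0 2, z00, pd_const]
  have hPA2 : ∀ x, pd 2 (pd 0 (comp u 0)) x = -(pd 2 (pd 1 (comp u 1)) x) := by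
    intro x
    have e1 : pd 2 (pd 0 (comp u 0)) x = pdd 0 2 u 0 x := pd_swap (hcu 0) 2 0 x
    have e2 : pd 2 (pd 1 (comp u 1)) x = pdd 1 2 u 1 x := pd_swap (hcu 1) 2 1 x
    have := h7 x
    rw [e1, e2]; linarith
  have hPfun : pd 2 (pd 0 (comp u 0)) = fun x => -(pd 2 (pd 1 (comp u 1)) x) :=
    funext hPA2
  have hP1 : ∀ y, pd 1 (pd 2 (pd 0 (comp u 0))) y = 0 := by
    intro y
    rw [hPfun, pd_neg', pd_swap' (pd_smooth (hcu 1) 1) 1 2, z11, pd_const']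
    simp
  -- harmonicity of A1
  have hH1 : ∀ x, pd 1 (pd 1 (pd 0 (comp u 0))) x + pd 2 (pd 2 (pd 0 (comp u 0))) x = 0 := by
    intro x
    have e1 : pd 1 (pd 1 (pd 0 (comp u 0))) = pd 0 (pd 1 (pd 1 (comp u 0))) := by
      rw [pd_swap' (hcu 0) 1 0, pd_swap' (pd_smooth (hcu 0) 1) 1 0]
    have e2 : pd 2 (pd 2 (pd 0 (comp u 0))) = pd 0 (pd 2 (pd 2 (comp u 0))) := by
      rw [pd_swap' (hcu 0) 2 0, pd_swap' (pd_smooth (hcu 0) 2) 2 0]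
    rw [e1, e2]
    have hadd := pd_add (pd_diff (pd_smooth (hcu 0) 1) 1) (pd_diff (pd_smooth (hcu 0) 2) 2) 0 x
    have hzero : (fun y => pd 1 (pd 1 (comp u 0)) y + pd 2 (pd 2 (comp u 0)) y)
        = fun _ => (0:ℝ) := funext h4
    rw [hzero, pd_const] at hadd
    linarith
  -- P facts continued
  have zP0 : pd 0 (pd 2 (pd 0 (comp u 0))) = fun _ => (0:ℝ) := funext hP0
  have zP1 : pd 1 (pd 2 (pd 0 (comp u 0))) = fun _ => (0:ℝ) := funext hP1
  have hP22 : ∀ y, pd 2 (pd 2 (pd 2 (pd 0 (comp u 0)))) y = 0 := by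
    intro y
    have hPfun2 : pd 2 (pd 2 (pd 0 (comp u 0))) = fun x => -(pd 1 (pd 1 (pd 0 (comp u 0))) x) :=
      funext fun x => by have := hH1 x; linarith
    rw [hPfun2, pd_neg']
    simp only [neg_eq_zero]
    rw [pd_swap' (pd_smooth hA1 1) 2 1, pd_swap' hA1 2 1, zP1, pd_const]
  have hTc : ∀ (j : Fin 3) (y : Fin 3 → ℝ), pd j (pd 2 (pd 2 (pd 0 (comp u 0)))) y = 0 := by
    intro j y
    fin_cases j
    · show pd 0 (pd 2 (pd 2 (pd 0 (comp u 0)))) y = 0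
      rw [pd_swap hP 0 2 y, zP0, pd_const]
    · show pd 1 (pd 2 (pd 2 (pd 0 (comp u 0)))) y = 0
      rw [pd_swap hP 1 2 y, zP1, pd_const]
    · show pd 2 (pd 2 (pd 2 (pd 0 (comp u 0)))) y = 0
      exact hP22 y
  obtain ⟨a, hPa⟩ : ∃ a : ℝ, ∀ x, pd 2 (pd 2 (pd 0 (comp u 0))) x = a :=
    ⟨_, fun x => Tconst (pd_diff hP 2) hTc x⟩
  obtain ⟨c₁, hPlin⟩ : ∃ c₁ : ℝ, ∀ x, pd 2 (pd 0 (comp u 0)) x = a * x 2 + c₁ := by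
    refine ⟨pd 2 (pd 0 (comp u 0)) 0, fun x => ?_⟩
    have e1 := T1 hP 2 hP22 x
    have e2 : pd 2 (pd 0 (comp u 0)) (Function.update x 2 0)
        = pd 2 (pd 0 (comp u 0)) 0 := by
      rw [T0 (pd_diff hA1 2) 0 hP0 _, T0 (pd_diff hA1 2) 1 hP1 _]
      congr 1
      funext i; fin_cases i <;> simp
    rw [e2, hPa] at e1
    rw [e1]; ring
  -- Q facts
  have hQ0 : ∀ y, pd 0 (pd 1 (pd 0 (comp u 0))) y = 0 := by
    intro y; rw [pd_swap hA1 0 1 y, z00, pd_const]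
  have hQ2 : ∀ y, pd 2 (pd 1 (pd 0 (comp u 0))) y = 0 := by
    intro y; rw [pd_swap hA1 2 1 y, zP1]
  have hQ1 : ∀ x, pd 1 (pd 1 (pd 0 (comp u 0))) x = -a := by
    intro x
    have := hH1 x
    have := hPa x
    linarith
  have hQ11 : ∀ y, pd 1 (pd 1 (pd 1 (pd 0 (comp u 0)))) y = 0 := by
    intro y
    have hfun : pd 1 (pd 1 (pd 0 (comp u 0))) = fun _ => -a := funext hQ1
    rw [hfun, pd_const]
  obtain ⟨b₁, hQlin⟩ : ∃ b₁ : ℝ, ∀ x, pd 1 (pd 0 (comp u 0)) x = -(a * x 1) + b₁ := by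
    refine ⟨pd 1 (pd 0 (comp u 0)) 0, fun x => ?_⟩
    have e1 := T1 hQ 1 hQ11 x
    have e2 : pd 1 (pd 0 (comp u 0)) (Function.update x 1 0)
        = pd 1 (pd 0 (comp u 0)) 0 := by
      rw [T0 (pd_diff hA1 1) 0 hQ0 _, T0 (pd_diff hA1 1) 2 hQ2 _]
      congr 1
      funext i; fin_cases i <;> simp
    rw [e2, hQ1] at e1
    rw [e1]; ring
  -- S facts
  have hA2Pfun : pd 2 (pd 1 (comp u 1)) = fun x => -(pd 2 (pd 0 (comp u 0)) x) :=
    funext fun x => by have := hPA2 x; linarith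
  have hS1 : ∀ y, pd 1 (pd 0 (pd 1 (comp u 1))) y = 0 := by
    intro y; rw [pd_swap hA2 1 0 y, z11, pd_const]
  have hS2 : ∀ y, pd 2 (pd 0 (pd 1 (comp u 1))) y = 0 := by
    intro y
    rw [pd_swap hA2 2 0 y, hA2Pfun, pd_neg']
    simp only [neg_eq_zero]
    exact hP0 y
  have hH2 : ∀ x, pd 0 (pd 0 (pd 1 (comp u 1))) x + pd 2 (pd 2 (pd 1 (comp u 1))) x = 0 := by
    intro x
    have e1 : pd 0 (pd 0 (pd 1 (comp u 1))) = pd 1 (pd 0 (pd 0 (comp u 1))) := by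
      rw [pd_swap' (hcu 1) 0 1, pd_swap' (pd_smooth (hcu 1) 0) 0 1]
    have e2 : pd 2 (pd 2 (pd 1 (comp u 1))) = pd 1 (pd 2 (pd 2 (comp u 1))) := by
      rw [pd_swap' (hcu 1) 2 1, pd_swap' (pd_smooth (hcu 1) 2) 2 1]
    rw [e1, e2]
    have hadd := pd_add (pd_diff (pd_smooth (hcu 1) 0) 0) (pd_diff (pd_smooth (hcu 1) 2) 2) 1 x
    have hzero : (fun y => pd 0 (pd 0 (comp u 1)) y + pd 2 (pd 2 (comp u 1)) y)
        = fun _ => (0:ℝ) := funext h5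
    rw [hzero, pd_const] at hadd
    linarith
  have hS0 : ∀ x, pd 0 (pd 0 (pd 1 (comp u 1))) x = a := by
    intro x
    have e : pd 2 (pd 2 (pd 1 (comp u 1))) x = -(pd 2 (pd 2 (pd 0 (comp u 0))) x) := by
      rw [hA2Pfun, pd_neg']
    have := hH2 x
    have := hPa x
    linarith [e]
  have hS00 : ∀ y, pd 0 (pd 0 (pd 0 (pd 1 (comp u 1)))) y = 0 := by
    intro y
    have hfun : pd 0 (pd 0 (pd 1 (comp u 1))) = fun _ => a := funext hS0
    rw [hfun, pd_const]
  obtain ⟨a₁, hSlin⟩ : ∃ a₁ : ℝ, ∀ x, pd 0 (pd 1 (comp u 1)) x = a * x 0 + a₁ := by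
    refine ⟨pd 0 (pd 1 (comp u 1)) 0, fun x => ?_⟩
    have e1 := T1 hS 0 hS00 x
    have e2 : pd 0 (pd 1 (comp u 1)) (Function.update x 0 0)
        = pd 0 (pd 1 (comp u 1)) 0 := by
      rw [T0 (pd_diff hA2 0) 1 hS1 _, T0 (pd_diff hA2 0) 2 hS2 _]
      congr 1
      funext i; fin_cases i <;> simp
    rw [e2, hS0] at e1
    rw [e1]; ring
  -- reconstruct A1
  obtain ⟨d₁, hA1val⟩ : ∃ d₁ : ℝ, ∀ y, pd 0 (comp u 0) y
      = (a/2) * ((y 2)^2 - (y 1)^2) + c₁ * y 2 + b₁ * y 1 + d₁ := by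
    refine ⟨pd 0 (comp u 0) 0, fun y => ?_⟩
    have e1 := T2 hA1 1 hQ11 y
    have e2 := T2 hA1 2 hP22 (Function.update y 1 0)
    have e3 : pd 0 (comp u 0) (Function.update (Function.update y 1 0) 2 0)
        = pd 0 (comp u 0) 0 := by
      rw [T0 (pd_diff (hcu 0) 0) 0 h1 _]
      congr 1
      funext i; fin_cases i <;> simp
    rw [hQlin, hQ1] at e1
    rw [hPlin, hPa, e3] at e2
    simp only [Function.update_self] at e1 e2
    have hu2 : (Function.update y 1 0 : Fin 3 → ℝ) 2 = y 2 := by simp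
    rw [hu2] at e2
    rw [e1, e2]; ring
  -- reconstruct A2
  have hA2_222 : ∀ w, pd 2 (pd 2 (pd 2 (pd 1 (comp u 1)))) w = 0 := by
    intro w
    rw [hA2Pfun, pd_neg', show (fun x => -(pd 2 (pd 2 (pd 0 (comp u 0))) x)) = fun _ => -a
      from funext fun z => by rw [hPa], pd_const]
  have hA2v2 : ∀ w, pd 2 (pd 1 (comp u 1)) w = -(a * w 2 + c₁) := by
    intro w
    have := hPA2 w
    have := hPlin w
    linarith
  have hA2v22 : ∀ w, pd 2 (pd 2 (pd 1 (comp u 1))) w = -a := by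
    intro w
    rw [hA2Pfun, pd_neg']
    simp only [hPa]
  obtain ⟨d₂, hA2val⟩ : ∃ d₂ : ℝ, ∀ y, pd 1 (comp u 1) y
      = (a/2) * ((y 0)^2 - (y 2)^2) + a₁ * y 0 - c₁ * y 2 + d₂ := by
    refine ⟨pd 1 (comp u 1) 0, fun y => ?_⟩
    have e1 := T2 hA2 0 hS00 y
    have e2 := T2 hA2 2 hA2_222 (Function.update y 0 0)
    have e3 : pd 1 (comp u 1) (Function.update (Function.update y 0 0) 2 0)
        = pd 1 (comp u 1) 0 := by
      rw [T0 (pd_diff (hcu 1) 1) 1 h2 _]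
      congr 1
      funext i; fin_cases i <;> simp
    rw [hSlin, hS0] at e1
    rw [hA2v2, hA2v22, e3] at e2
    simp only [Function.update_self] at e1 e2
    have hu2 : (Function.update y 0 0 : Fin 3 → ℝ) 2 = y 2 := by simp
    rw [hu2] at e2
    rw [e1, e2]; ring
  -- reconstruct A3
  have hA3_0 : ∀ x, pd 0 (pd 2 (comp u 2)) x = -(pd 0 (pd 1 (comp u 1)) x) := by
    intro x
    have hh := h8 x
    rw [show pdd 0 1 u 1 x = pd 0 (pd 1 (comp u 1)) x from rfl,
      show pdd 0 2 u 2 x = pd 0 (pd 2 (comp u 2)) x from rfl] at hh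
    linarith
  have hA3_1 : ∀ x, pd 1 (pd 2 (comp u 2)) x = -(pd 1 (pd 0 (comp u 0)) x) := by
    intro x
    have e := pd_swap (hcu 0) 0 1 x
    have hh := h9 x
    rw [show pdd 0 1 u 0 x = pd 0 (pd 1 (comp u 0)) x from rfl, e,
      show pdd 1 2 u 2 x = pd 1 (pd 2 (comp u 2)) x from rfl] at hh
    linarith
  have hfun0 : pd 0 (pd 2 (comp u 2)) = fun x => -(pd 0 (pd 1 (comp u 1)) x) := funext hA3_0
  have hfun1 : pd 1 (pd 2 (comp u 2)) = fun x => -(pd 1 (pd 0 (comp u 0)) x) := funext hA3_1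
  have hA3v0 : ∀ w, pd 0 (pd 2 (comp u 2)) w = -(a * w 0 + a₁) := by
    intro w
    have := hA3_0 w
    have := hSlin w
    linarith
  have hA3v00 : ∀ w, pd 0 (pd 0 (pd 2 (comp u 2))) w = -a := by
    intro w
    rw [hfun0, pd_neg']
    simp only [hS0]
  have hA3_000 : ∀ w, pd 0 (pd 0 (pd 0 (pd 2 (comp u 2)))) w = 0 := by
    intro w
    rw [hfun0, pd_neg', show (fun x => -(pd 0 (pd 0 (pd 1 (comp u 1))) x)) = fun _ => -a
      from funext fun z => by rw [hS0], pd_const]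
  have hA3v1 : ∀ w, pd 1 (pd 2 (comp u 2)) w = -(-(a * w 1) + b₁) := by
    intro w
    have := hA3_1 w
    have := hQlin w
    linarith
  have hA3v11 : ∀ w, pd 1 (pd 1 (pd 2 (comp u 2))) w = a := by
    intro w
    rw [hfun1, pd_neg']
    simp only [hQ1]
    ring
  have hA3_111 : ∀ w, pd 1 (pd 1 (pd 1 (pd 2 (comp u 2)))) w = 0 := by
    intro w
    rw [hfun1, pd_neg', show (fun x => -(pd 1 (pd 1 (pd 0 (comp u 0))) x)) = fun _ => a
      from funext fun z => by rw [hQ1]; ring, pd_const]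
  obtain ⟨d₃, hA3val⟩ : ∃ d₃ : ℝ, ∀ y, pd 2 (comp u 2) y
      = (a/2) * ((y 1)^2 - (y 0)^2) - a₁ * y 0 - b₁ * y 1 + d₃ := by
    refine ⟨pd 2 (comp u 2) 0, fun y => ?_⟩
    have e1 := T2 hA3 0 hA3_000 y
    have e2 := T2 hA3 1 hA3_111 (Function.update y 0 0)
    have e3 : pd 2 (comp u 2) (Function.update (Function.update y 0 0) 1 0)
        = pd 2 (comp u 2) 0 := by
      rw [T0 (pd_diff (hcu 2) 2) 2 h3 _]
      congr 1
      funext i; fin_cases i <;> simp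
    rw [hA3v0, hA3v00] at e1
    rw [hA3v1, hA3v11, e3] at e2
    simp only [Function.update_self] at e1 e2
    have hu1 : (Function.update y 0 0 : Fin 3 → ℝ) 1 = y 1 := by simp
    rw [hu1] at e2
    rw [e1, e2]; ring
  -- assemble
  refine ⟨a, a₁, b₁, c₁, d₁, d₂, d₃,
    (fun p => u (M₁ p) 0), (fun p => u (M₂ p) 1), (fun p => u (M₃ p) 2),
    (hcu 0).comp M₁.contDiff, (hcu 1).comp M₂.contDiff, (hcu 2).comp M₃.contDiff,
    ?_, ?_, ?_, ?_, ?_, ?_⟩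
  · intro p
    have r1 : pd2 0 (fun q => u (M₁ q) 0) = fun q => pd 1 (comp u 0) (M₁ q) := by
      funext q
      have hq := pd2_comp_clm (hcud 0) M₁ 0 q
      rw [M₁_single0] at hq
      exact hq
    have r2 : pd2 1 (fun q => u (M₁ q) 0) = fun q => pd 2 (comp u 0) (M₁ q) := by
      funext q
      have hq := pd2_comp_clm (hcud 0) M₁ 1 q
      rw [M₁_single1] at hq
      exact hq
    rw [r1, r2]
    have s1 := pd2_comp_clm (pd_diff (hcu 0) 1) M₁ 0 p
    rw [M₁_single0] at s1
    have s2 := pd2_comp_clm (pd_diff (hcu 0) 2) M₁ 1 p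
    rw [M₁_single1] at s2
    rw [s1, s2]
    exact h4 (M₁ p)
  · intro p
    have r1 : pd2 0 (fun q => u (M₂ q) 1) = fun q => pd 0 (comp u 1) (M₂ q) := by
      funext q
      have hq := pd2_comp_clm (hcud 1) M₂ 0 q
      rw [M₂_single0] at hq
      exact hq
    have r2 : pd2 1 (fun q => u (M₂ q) 1) = fun q => pd 2 (comp u 1) (M₂ q) := by
      funext q
      have hq := pd2_comp_clm (hcud 1) M₂ 1 q
      rw [M₂_single1] at hq
      exact hq
    rw [r1, r2]
    have s1 := pd2_comp_clm (pd_diff (hcu 1) 0) M₂ 0 p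
    rw [M₂_single0] at s1
    have s2 := pd2_comp_clm (pd_diff (hcu 1) 2) M₂ 1 p
    rw [M₂_single1] at s2
    rw [s1, s2]
    exact h5 (M₂ p)
  · intro p
    have r1 : pd2 0 (fun q => u (M₃ q) 2) = fun q => pd 0 (comp u 2) (M₃ q) := by
      funext q
      have hq := pd2_comp_clm (hcud 2) M₃ 0 q
      rw [M₃_single0] at hq
      exact hq
    have r2 : pd2 1 (fun q => u (M₃ q) 2) = fun q => pd 1 (comp u 2) (M₃ q) := by
      funext q
      have hq := pd2_comp_clm (hcud 2) M₃ 1 q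
      rw [M₃_single1] at hq
      exact hq
    rw [r1, r2]
    have s1 := pd2_comp_clm (pd_diff (hcu 2) 0) M₃ 0 p
    rw [M₃_single0] at s1
    have s2 := pd2_comp_clm (pd_diff (hcu 2) 1) M₃ 1 p
    rw [M₃_single1] at s2
    rw [s1, s2]
    exact h6 (M₃ p)
  · intro x
    have e1 := T1 (hcu 0) 0 h1 x
    rw [hA1val] at e1
    have hv1 : (Function.update x 0 0 : Fin 3 → ℝ) 1 = x 1 := by simp
    have hv2 : (Function.update x 0 0 : Fin 3 → ℝ) 2 = x 2 := by simp
    rw [hv1, hv2] at e1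
    show comp u 0 x = (a / 2) * x 0 * (x 2 ^ 2 - x 1 ^ 2) + c₁ * (x 0 * x 2)
        + b₁ * (x 0 * x 1) + d₁ * x 0 + comp u 0 (M₁ ![x 1, x 2])
    rw [M₁_emb, e1]
    ring
  · intro x
    have e1 := T1 (hcu 1) 1 h2 x
    rw [hA2val] at e1
    have hv0 : (Function.update x 1 0 : Fin 3 → ℝ) 0 = x 0 := by simp
    have hv2 : (Function.update x 1 0 : Fin 3 → ℝ) 2 = x 2 := by simp
    rw [hv0, hv2] at e1
    show comp u 1 x = (a / 2) * x 1 * (x 0 ^ 2 - x 2 ^ 2) + a₁ * (x 0 * x 1)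
        - c₁ * (x 1 * x 2) + d₂ * x 1 + comp u 1 (M₂ ![x 0, x 2])
    rw [M₂_emb, e1]
    ring
  · intro x
    have e1 := T1 (hcu 2) 2 h3 x
    rw [hA3val] at e1
    have hv0 : (Function.update x 2 0 : Fin 3 → ℝ) 0 = x 0 := by simp
    have hv1 : (Function.update x 2 0 : Fin 3 → ℝ) 1 = x 1 := by simp
    rw [hv0, hv1] at e1
    show comp u 2 x = (a / 2) * x 2 * (x 1 ^ 2 - x 0 ^ 2) - a₁ * (x 0 * x 2)
        - b₁ * (x 1 * x 2) + d₃ * x 2 + comp u 2 (M₃ ![x 0, x 1])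
    rw [M₃_emb, e1]
    ring
end forward

/-- A smooth displacement field `u : ℝ³ → ℝ³` satisfies the cubic universality
constraints if and only if it has the explicit representation involving the constants
`a, a₁, b₁, c₁, d₁, d₂, d₃` and smooth harmonic functions `g₁, g₂, g₃` of two variables. -/
theorem cubic_universal_displacements
    (u : (Fin 3 → ℝ) → Fin 3 → ℝ) (hu : ContDiff ℝ (⊤ : ℕ∞) u) :
    ((∀ x, pdd 0 0 u 0 x = 0) ∧ (∀ x, pdd 1 1 u 1 x = 0) ∧ (∀ x, pdd 2 2 u 2 x = 0) ∧
     (∀ x, pdd 1 1 u 0 x + pdd 2 2 u 0 x = 0) ∧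
     (∀ x, pdd 0 0 u 1 x + pdd 2 2 u 1 x = 0) ∧
     (∀ x, pdd 0 0 u 2 x + pdd 1 1 u 2 x = 0) ∧
     (∀ x, pdd 0 2 u 0 x + pdd 1 2 u 1 x = 0) ∧
     (∀ x, pdd 0 1 u 1 x + pdd 0 2 u 2 x = 0) ∧
     (∀ x, pdd 0 1 u 0 x + pdd 1 2 u 2 x = 0)) ↔
    ∃ (a a₁ b₁ c₁ d₁ d₂ d₃ : ℝ) (g₁ g₂ g₃ : (Fin 2 → ℝ) → ℝ),
      ContDiff ℝ (⊤ : ℕ∞) g₁ ∧ ContDiff ℝ (⊤ : ℕ∞) g₂ ∧ ContDiff ℝ (⊤ : ℕ∞) g₃ ∧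
      (∀ p, pd2 0 (pd2 0 g₁) p + pd2 1 (pd2 1 g₁) p = 0) ∧
      (∀ p, pd2 0 (pd2 0 g₂) p + pd2 1 (pd2 1 g₂) p = 0) ∧
      (∀ p, pd2 0 (pd2 0 g₃) p + pd2 1 (pd2 1 g₃) p = 0) ∧
      (∀ x, u x 0 = (a / 2) * x 0 * (x 2 ^ 2 - x 1 ^ 2) + c₁ * (x 0 * x 2)
          + b₁ * (x 0 * x 1) + d₁ * x 0 + g₁ ![x 1, x 2]) ∧
      (∀ x, u x 1 = (a / 2) * x 1 * (x 0 ^ 2 - x 2 ^ 2) + a₁ * (x 0 * x 1)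
          - c₁ * (x 1 * x 2) + d₂ * x 1 + g₂ ![x 0, x 2]) ∧
      (∀ x, u x 2 = (a / 2) * x 2 * (x 1 ^ 2 - x 0 ^ 2) - a₁ * (x 0 * x 2)
          - b₁ * (x 1 * x 2) + d₃ * x 2 + g₃ ![x 0, x 1]) := by
  constructor
  · rintro ⟨c1, c2, c3, c4, c5, c6, c7, c8, c9⟩
    exact forward_repr u hu c1 c2 c3 c4 c5 c6 c7 c8 c9
  · rintro ⟨a, a₁, b₁, c₁, d₁, d₂, d₃, g₁, g₂, g₃, hg₁, hg₂, hg₃, hh₁, hh₂, hh₃, e₁, e₂, e₃⟩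
    exact backward_constraints u a a₁ b₁ c₁ d₁ d₂ d₃ g₁ g₂ g₃ hg₁ hg₂ hg₃ hh₁ hh₂ hh₃ e₁ e₂ e₃
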